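/- Let (A,C)_ψ be an entwining structure with C finitely generated projective over k. If there exists a right C-comodule isomorphism φ : C* → C such that ψ∘(φ⊗A)∘ψ̄ = A⊗φ, then e := φ(ε) satisfies C* ⇀ e = C and ψ(e ⊗ a) = a ⊗ e for all a ∈ A; moreover φ(ξ) = ξ ⇀ e for all ξ ∈ C*. -/

import Mathlib

open TensorProduct LinearMap

noncomputable section

variable (k A C : Type*) [CommRing k] [Ring A] [Algebra k A]
  [AddCommGroup C] [Module k C] [Coalgebra k C]

/-- An entwining structure `(A,C)_ψ` over `k`. -/
structure Entwining where
  psi : C ⊗[k] A →ₗ[k] A ⊗[k] C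
  mul_compat :
    psi ∘ₗ lTensor C (LinearMap.mul' k A)
      = rTensor C (LinearMap.mul' k A)
        ∘ₗ (TensorProduct.assoc k A A C).symm.toLinearMap
        ∘ₗ lTensor A psi
        ∘ₗ (TensorProduct.assoc k A C A).toLinearMap
        ∘ₗ rTensor A psi
        ∘ₗ (TensorProduct.assoc k C A A).symm.toLinearMap
  one_compat : ∀ c : C, psi (c ⊗ₜ[k] (1 : A)) = (1 : A) ⊗ₜ[k] c
  comul_compat :
    lTensor A (Coalgebra.comul (R := k) (A := C)) ∘ₗ psi
      = (TensorProduct.assoc k A C C).toLinearMap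
        ∘ₗ rTensor C psi
        ∘ₗ (TensorProduct.assoc k C A C).symm.toLinearMap
        ∘ₗ lTensor C psi
        ∘ₗ (TensorProduct.assoc k C C A).toLinearMap
        ∘ₗ rTensor A (Coalgebra.comul (R := k) (A := C))
  counit_compat : ∀ (c : C) (a : A),
    (TensorProduct.rid k A)
        ((lTensor A (Coalgebra.counit (R := k) (A := C))) (psi (c ⊗ₜ[k] a)))
      = Coalgebra.counit (R := k) c • a

variable {k A C} in
/-- Evaluation of the first (dual) factor at `c`: `ξ ⊗ a ↦ ξ(c) • a`. -/
def evFst (c : C) : Module.Dual k C ⊗[k] A →ₗ[k] A :=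
  TensorProduct.lift ((LinearMap.lsmul k A) ∘ₗ
    (LinearMap.applyₗ (R := k) c : (C →ₗ[k] k) →ₗ[k] k))

variable {k A C} in
/-- Evaluation of the second (coalgebra) factor against `ξ`: `a ⊗ c ↦ ξ(c) • a`. -/
def evSnd (ξ : Module.Dual k C) : A ⊗[k] C →ₗ[k] A :=
  (TensorProduct.rid k A).toLinearMap ∘ₗ lTensor A ξ

variable {k A C} in
/-- `ψ̄ : A ⊗ C* → C* ⊗ A` is a factorisation map for the entwining `ψ`:
`⟨c^α, ξ⟩ a_α = ξ_i(c) a^i`. -/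
def IsFactorisation (E : Entwining k A C)
    (ψbar : A ⊗[k] Module.Dual k C →ₗ[k] Module.Dual k C ⊗[k] A) : Prop :=
  ∀ (a : A) (ξ : Module.Dual k C) (c : C),
    evFst c (ψbar (a ⊗ₜ[k] ξ)) = evSnd ξ (E.psi (c ⊗ₜ[k] a))

/-- The product of `B = C^{*op}`, i.e. the opposite convolution product:
`⟨c, b b'⟩ = ⟨c₍₂₎, b⟩ ⟨c₍₁₎, b'⟩`, as a linear map `B ⊗ B →ₗ B`. -/
def opConv : Module.Dual k C ⊗[k] Module.Dual k C →ₗ[k] Module.Dual k C :=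
  ((LinearMap.llcomp k C (C ⊗[k] C) k).flip (Coalgebra.comul (R := k) (A := C)))
  ∘ₗ (LinearMap.llcomp k (C ⊗[k] C) (k ⊗[k] k) k (LinearMap.mul' k k))
  ∘ₗ TensorProduct.homTensorHomMap (RingHom.id k) C C k k
  ∘ₗ (TensorProduct.comm k (Module.Dual k C) (Module.Dual k C)).toLinearMap

variable {k A C} in
/-- The multiplication of the smash product `B #_ψ̄ A` on `B ⊗ A`, `B = C^{*op}`:
`(b ⊗ a)(b' ⊗ a') = b ψ̄(a ⊗ b') a'`. -/
def smashMul (ψbar : A ⊗[k] Module.Dual k C →ₗ[k] Module.Dual k C ⊗[k] A) :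
    (Module.Dual k C ⊗[k] A) ⊗[k] (Module.Dual k C ⊗[k] A) →ₗ[k]
      Module.Dual k C ⊗[k] A :=
  rTensor A (opConv k C)
  ∘ₗ (TensorProduct.assoc k (Module.Dual k C) (Module.Dual k C) A).symm.toLinearMap
  ∘ₗ lTensor (Module.Dual k C) (lTensor (Module.Dual k C) (LinearMap.mul' k A))
  ∘ₗ lTensor (Module.Dual k C) (TensorProduct.assoc k (Module.Dual k C) A A).toLinearMap
  ∘ₗ lTensor (Module.Dual k C) (rTensor A ψbar)
  ∘ₗ lTensor (Module.Dual k C) (TensorProduct.assoc k A (Module.Dual k C) A).symm.toLinearMap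
  ∘ₗ (TensorProduct.assoc k (Module.Dual k C) A (Module.Dual k C ⊗[k] A)).toLinearMap

/-- The unit `ε ⊗ 1_A` of the smash product. -/
def smashOne : Module.Dual k C ⊗[k] A :=
  (Coalgebra.counit (R := k) (A := C)) ⊗ₜ[k] (1 : A)

variable {k C} in
/-- `φ_e : C* → C`, `ξ ↦ ξ ⇀ e = e₍₁₎ ⟨e₍₂₎, ξ⟩`. -/
def phiMap (e : C) : Module.Dual k C →ₗ[k] C :=
  (((LinearMap.llcomp k (C ⊗[k] C) (C ⊗[k] k) C
      (TensorProduct.rid k C).toLinearMap)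
    ∘ₗ (LinearMap.lTensorHom C)).flip) (Coalgebra.comul (R := k) e)

variable {k C} in
/-- `ξ ↦ e ↼ ξ = ⟨e₍₁₎, ξ⟩ e₍₂₎`. -/
def rarrowMap (e : C) : Module.Dual k C →ₗ[k] C :=
  (((LinearMap.llcomp k (C ⊗[k] C) (k ⊗[k] C) C
      (TensorProduct.lid k C).toLinearMap)
    ∘ₗ (LinearMap.rTensorHom C)).flip) (Coalgebra.comul (R := k) e)

variable {k C} in
/-- The (standard) convolution product on `C*`: `(ξ ξ')(c) = ξ(c₍₁₎) ξ'(c₍₂₎)`. -/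
def conv (ξ ξ' : Module.Dual k C) : Module.Dual k C :=
  (LinearMap.mul' k k) ∘ₗ TensorProduct.map ξ ξ' ∘ₗ Coalgebra.comul (R := k)

variable {k C} in
/-- `coactD` is the right `C`-coaction on `C*` determined by
`ξ₍₀₎ ⟨ξ₍₁₎, ξ'⟩ = ξ' ξ`. -/
def IsDualCoaction (coactD : Module.Dual k C →ₗ[k] Module.Dual k C ⊗[k] C) :
    Prop :=
  ∀ ξ ξ' : Module.Dual k C,
    (TensorProduct.rid k (Module.Dual k C))
        ((lTensor (Module.Dual k C) ξ') (coactD ξ))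
      = conv ξ' ξ

/-!
Pairing the second leg of `Δ(φ ε) = (φ ⊗ C)(ε₍₀₎ ⊗ ε₍₁₎)` with `ξ` gives
`ξ ⇀ φ ε = φ (ξ ε) = φ ξ`, so `C* ⇀ e` is the image of `φ`, which is all of `C`.
Since `C` is finitely generated projective, `C* ⊗ A` embeds into `Hom(C, A)`, so the counit
axiom of the entwining forces `ψ̄(a ⊗ ε) = ε ⊗ a`; the compatibility of `φ` with `ψ` and `ψ̄`,
evaluated at `a ⊗ ε`, then reads `ψ(e ⊗ a) = a ⊗ e`.
-/

variable {k A C}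

lemma evFst_apply {k A C : Type*} [CommRing k] [Ring A] [Algebra k A] [AddCommGroup C]
    [Module k C] (c : C) (x : Module.Dual k C ⊗[k] A) :
    evFst c x = dualTensorHom k C A x c := by
  induction x using TensorProduct.induction_on with
  | zero => simp
  | tmul ξ a => simp [evFst, dualTensorHom_apply]
  | add x y hx hy => simp only [map_add, hx, hy, LinearMap.add_apply]

lemma ext_evFst {k A C : Type*} [CommRing k] [Ring A] [Algebra k A] [AddCommGroup C]
    [Module k C] [Module.Finite k C] [Module.Projective k C] {x y : Module.Dual k C ⊗[k] A}
    (h : ∀ c : C, evFst c x = evFst c y) : x = y :=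
  dualTensorHom_bijective.injective <| LinearMap.ext fun c => by
    simpa only [evFst_apply] using h c

lemma IsFactorisation.apply_tmul_counit [Module.Finite k C] [Module.Projective k C]
    {E : Entwining k A C} {ψbar : A ⊗[k] Module.Dual k C →ₗ[k] Module.Dual k C ⊗[k] A}
    (hfact : IsFactorisation E ψbar) (a : A) :
    ψbar (a ⊗ₜ[k] Coalgebra.counit) = Coalgebra.counit ⊗ₜ[k] a :=
  ext_evFst fun c => by
    rw [hfact, evSnd, LinearMap.comp_apply, LinearEquiv.coe_coe, E.counit_compat]
    simp [evFst]

lemma conv_counit (ξ : Module.Dual k C) : conv ξ Coalgebra.counit = ξ := by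
  ext c
  rw [conv, LinearMap.comp_apply, LinearMap.comp_apply, ← LinearMap.rTensor_comp_lTensor,
    LinearMap.comp_apply, Coalgebra.lTensor_counit_comul]
  simp

lemma apply_eq_phiMap_apply_counit {coactD : Module.Dual k C →ₗ[k] Module.Dual k C ⊗[k] C}
    (hcoactD : IsDualCoaction coactD) {φ : Module.Dual k C →ₗ[k] C}
    (hcolin : Coalgebra.comul ∘ₗ φ = rTensor C φ ∘ₗ coactD) (ξ : Module.Dual k C) :
    φ ξ = phiMap (φ Coalgebra.counit) ξ := by
  have hcomul : Coalgebra.comul (φ Coalgebra.counit) = rTensor C φ (coactD Coalgebra.counit) :=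
    LinearMap.congr_fun hcolin _
  have hrid : (TensorProduct.rid k C).toLinearMap ∘ₗ rTensor k φ
      = φ ∘ₗ (TensorProduct.rid k (Module.Dual k C)).toLinearMap :=
    TensorProduct.ext' fun _ _ => by simp
  calc φ ξ = φ (conv ξ Coalgebra.counit) := by rw [conv_counit]
    _ = φ (TensorProduct.rid k _ (lTensor _ ξ (coactD Coalgebra.counit))) := by rw [hcoactD]
    _ = TensorProduct.rid k C (rTensor k φ (lTensor _ ξ (coactD Coalgebra.counit))) :=
      (LinearMap.congr_fun hrid _).symm
    _ = TensorProduct.rid k C (lTensor C ξ (rTensor C φ (coactD Coalgebra.counit))) := by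
      rw [← LinearMap.comp_apply (rTensor k φ), LinearMap.rTensor_comp_lTensor,
        ← LinearMap.lTensor_comp_rTensor, LinearMap.comp_apply]
    _ = phiMap (φ Coalgebra.counit) ξ := by rw [← hcomul]; rfl

lemma psi_apply_counit_tmul [Module.Finite k C] [Module.Projective k C]
    {E : Entwining k A C} {ψbar : A ⊗[k] Module.Dual k C →ₗ[k] Module.Dual k C ⊗[k] A}
    (hfact : IsFactorisation E ψbar) {φ : Module.Dual k C →ₗ[k] C}
    (hcompat : E.psi ∘ₗ rTensor A φ ∘ₗ ψbar = lTensor A φ) (a : A) :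
    E.psi (φ Coalgebra.counit ⊗ₜ[k] a) = a ⊗ₜ[k] φ Coalgebra.counit := by
  simpa [hfact.apply_tmul_counit] using LinearMap.congr_fun hcompat (a ⊗ₜ[k] Coalgebra.counit)

theorem comodule_iso_gives_frobenius_element
    [Module.Finite k C] [Module.Projective k C]
    (E : Entwining k A C)
    (ψbar : A ⊗[k] Module.Dual k C →ₗ[k] Module.Dual k C ⊗[k] A)
    (hfact : IsFactorisation E ψbar)
    (coactD : Module.Dual k C →ₗ[k] Module.Dual k C ⊗[k] C)
    (hcoactD : IsDualCoaction coactD)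
    (φ : Module.Dual k C →ₗ[k] C)
    (hbij : Function.Bijective φ)
    (hcolin : (Coalgebra.comul (R := k) (A := C)) ∘ₗ φ = rTensor C φ ∘ₗ coactD)
    (hcompat : E.psi ∘ₗ rTensor A φ ∘ₗ ψbar = lTensor A φ) :
    Function.Surjective (phiMap (k := k) (φ (Coalgebra.counit (R := k) (A := C)))) ∧
    (∀ a : A,
      E.psi ((φ (Coalgebra.counit (R := k) (A := C))) ⊗ₜ[k] a)
        = a ⊗ₜ[k] (φ (Coalgebra.counit (R := k) (A := C)))) ∧
    (∀ ξ : Module.Dual k C,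
      φ ξ = phiMap (k := k) (φ (Coalgebra.counit (R := k) (A := C))) ξ) := by
  have hφ := apply_eq_phiMap_apply_counit hcoactD hcolin
  refine ⟨?_, psi_apply_counit_tmul hfact hcompat, hφ⟩
  rw [← funext hφ]
  exact hbij.surjective
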